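/- arXiv:1702.07849 — 2 statements merged into one kernel-verified Lean document; each statement's English description precedes it below -/
import Mathlib

section
/- Let L be a first-order language extending the language of rings whose only function symbols are those of the language of rings (no extra function symbols of arity > 0), and let D be an infinite integral domain which is an L-structure admitting quantifier elimination (every L-formula with parameters from D defines the same subset of D^n as some quantifier-free L-formula with parameters from D). Suppose D is equipped with a topological system: a topology τ_n on each D^n such that (1) for any n-ary L(D)-terms t_1, …, t_s the map D^n → D^s, a ↦ (t_1(a), …, t_s(a)), is continuous; (2) every singleton {a} ⊆ D is closed; (3) for every n-ary relation symbol R of L and every subsequence of indices 1 ≤ i_1 < … < i_k ≤ n, the set of tuples (a_{i_1}, …, a_{i_k}) ∈ D^k with all a_{i_j} ≠ 0 satisfying R at the point of D^n whose i_j-th coordinate is a_{i_j} and whose other coordinates are 0, and the analogous set satisfying the negation of R, are both open in D^k. Then every L-definable (with parameters) subset of D^n is a finite union of intersections of a Zariski closed subset of D^n with a special open subset of D^n; in particular, it is a finite union of locally closed subsets of D^n. -/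
/-!
By quantifier elimination it suffices to treat quantifier-free formulas. Take as generators the
zero sets of polynomials and the basic special open sets. The complement of each generator is a
finite union of generators (that of `{t ≠ 0 ∧ R(…)}` is `⋃ᵢ {tᵢ = 0} ∪ {t ≠ 0 ∧ ¬R(…)}`), so the
finite unions of finite intersections of generators already form a Boolean algebra. It contains
the atomic sets: as `L` has no function symbols besides the ring ones, terms are polynomials, and
`R(t₁, …, tₘ)` splits according to which `tᵢ` vanish. A finite intersection of generators is a
Zariski closed set cut by a special open set, and it is locally closed because term maps are
continuous, points are closed and the sets of condition (3) are open.
-/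

open FirstOrder

/-- A *basic special open* subset of `D^n`: either the nonzero set of an `L(D)`-term, or
the set where the relation symbol `R` holds (respectively fails) at the point whose
`i_j`-th coordinate is `t_{i_j}(a)` and whose other coordinates are `0`, with all
`t_{i_j}(a) ≠ 0`.  Here `L = ring ⊕ Lrel` and parameters from `D` are represented by
extra variables evaluated via `id`. -/
def IsBasicSpecialOpen (Lrel : FirstOrder.Language) (D : Type*) [CommRing D]
    [FirstOrder.Ring.CompatibleRing D] [Lrel.Structure D] {n : ℕ}
    (S : Set (Fin n → D)) : Prop :=
  (∃ t : (FirstOrder.Language.ring.sum Lrel).Term (Fin n ⊕ D),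
      S = {a : Fin n → D | t.realize (Sum.elim a id) ≠ 0}) ∨
  (∃ (m k : ℕ) (R : Lrel.Relations m) (j : Fin k → Fin m), StrictMono j ∧
    ∃ t : Fin k → (FirstOrder.Language.ring.sum Lrel).Term (Fin n ⊕ D),
      S = {a : Fin n → D | (∀ l, (t l).realize (Sum.elim a id) ≠ 0) ∧
            FirstOrder.Language.Structure.RelMap R
              (Function.extend j (fun l => (t l).realize (Sum.elim a id)) 0)} ∨
      S = {a : Fin n → D | (∀ l, (t l).realize (Sum.elim a id) ≠ 0) ∧
            ¬ FirstOrder.Language.Structure.RelMap R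
              (Function.extend j (fun l => (t l).realize (Sum.elim a id)) 0)})

/-- A *special open* subset of `D^n`: a finite intersection of basic special open sets. -/
def IsSpecialOpen (Lrel : FirstOrder.Language) (D : Type*) [CommRing D]
    [FirstOrder.Ring.CompatibleRing D] [Lrel.Structure D] {n : ℕ}
    (S : Set (Fin n → D)) : Prop :=
  ∃ (s : ℕ) (U : Fin s → Set (Fin n → D)),
    (∀ i, IsBasicSpecialOpen Lrel D (U i)) ∧ S = ⋂ i, U i

/-- A *Zariski closed* subset of `D^n`: a finite intersection of zero sets of polynomials
over `D`. -/
def IsZariskiClosed (D : Type*) [CommRing D] {n : ℕ} (S : Set (Fin n → D)) : Prop :=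
  ∃ (s : ℕ) (p : Fin s → MvPolynomial (Fin n) D),
    S = ⋂ i, {a : Fin n → D | MvPolynomial.eval a (p i) = 0}

namespace Set

variable {α : Type*} {𝓑 𝓒 : Set (Set α)}

def finiteInters (𝓑 : Set (Set α)) : Set (Set α) := {S | ∃ F ⊆ 𝓑, F.Finite ∧ S = ⋂₀ F}

def finiteUnions (𝓒 : Set (Set α)) : Set (Set α) := {S | ∃ F ⊆ 𝓒, F.Finite ∧ S = ⋃₀ F}

theorem subset_finiteInters : 𝓑 ⊆ finiteInters 𝓑 :=
  fun B hB => ⟨{B}, singleton_subset_iff.2 hB, finite_singleton B, (sInter_singleton B).symm⟩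

theorem univ_mem_finiteInters : univ ∈ finiteInters 𝓑 :=
  ⟨∅, empty_subset _, finite_empty, sInter_empty.symm⟩

theorem infClosed_finiteInters : InfClosed (finiteInters 𝓑) := by
  rintro _ ⟨F, hF, hFfin, rfl⟩ _ ⟨G, hG, hGfin, rfl⟩
  exact ⟨F ∪ G, union_subset hF hG, hFfin.union hGfin, (sInter_union F G).symm⟩

theorem subset_finiteUnions : 𝓒 ⊆ finiteUnions 𝓒 :=
  fun C hC => ⟨{C}, singleton_subset_iff.2 hC, finite_singleton C, (sUnion_singleton C).symm⟩

theorem empty_mem_finiteUnions : ∅ ∈ finiteUnions 𝓒 :=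
  ⟨∅, empty_subset _, finite_empty, sUnion_empty.symm⟩

theorem supClosed_finiteUnions : SupClosed (finiteUnions 𝓒) := by
  rintro _ ⟨F, hF, hFfin, rfl⟩ _ ⟨G, hG, hGfin, rfl⟩
  exact ⟨F ∪ G, union_subset hF hG, hFfin.union hGfin, (sUnion_union F G).symm⟩

theorem InfClosed.finiteUnions (h𝓒 : InfClosed 𝓒) : InfClosed (finiteUnions 𝓒) := by
  rintro _ ⟨F, hF, hFfin, rfl⟩ _ ⟨G, hG, hGfin, rfl⟩
  refine ⟨image2 (· ∩ ·) F G, ?_, hFfin.image2 _ hGfin, ?_⟩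
  · rintro _ ⟨A, hA, B, hB, rfl⟩
    exact h𝓒 (hF hA) (hG hB)
  · change _ ∩ _ = _
    rw [← image_prod, sUnion_image, sUnion_inter_sUnion]

theorem exists_fin_iUnion_of_mem_finiteUnions {S : Set α} (hS : S ∈ finiteUnions 𝓒) :
    ∃ (s : ℕ) (f : Fin s → Set α), (∀ i, f i ∈ 𝓒) ∧ S = ⋃ i, f i := by
  obtain ⟨F, hF, hFfin, rfl⟩ := hS
  obtain ⟨s, f, -, rfl⟩ := hFfin.fin_param
  exact ⟨s, f, fun i => hF (mem_range_self i), sUnion_range f⟩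

end Set

open Set in
def BooleanSubalgebra.finiteUnionsOfFiniteInters {α : Type*} (𝓑 : Set (Set α))
    (h𝓑 : ∀ B ∈ 𝓑, Bᶜ ∈ finiteUnions (finiteInters 𝓑)) : BooleanSubalgebra (Set α) where
  carrier := finiteUnions (finiteInters 𝓑)
  supClosed' := supClosed_finiteUnions
  infClosed' := infClosed_finiteInters.finiteUnions
  bot_mem' := empty_mem_finiteUnions
  compl_mem' := by
    rintro _ ⟨F, hF, hFfin, rfl⟩
    rw [compl_sUnion]
    refine infClosed_finiteInters.finiteUnions.sInf_mem (hFfin.image _)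
      (subset_finiteUnions univ_mem_finiteInters) ?_
    rintro _ ⟨_, hC, rfl⟩
    obtain ⟨G, hG, hGfin, rfl⟩ := hF hC
    rw [compl_sInter]
    refine supClosed_finiteUnions.sSup_mem (hGfin.image _) empty_mem_finiteUnions ?_
    rintro _ ⟨B, hB, rfl⟩
    exact h𝓑 B (hG hB)

theorem Finset.extend_orderEmbOfFin {m : ℕ} {M : Type*} [Zero M] (J : Finset (Fin m))
    {g : Fin m → M} (hg : ∀ i ∉ J, g i = 0) :
    Function.extend (J.orderEmbOfFin rfl) (fun l => g (J.orderEmbOfFin rfl l)) 0 = g := by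
  funext i
  by_cases hi : i ∈ J
  · obtain ⟨l, rfl⟩ : i ∈ Set.range (J.orderEmbOfFin rfl) := by
      rwa [Finset.range_orderEmbOfFin]
    exact (J.orderEmbOfFin rfl).injective.extend_apply _ _ l
  · rw [Function.extend_apply', hg i hi, Pi.zero_apply]
    rintro ⟨l, rfl⟩
    exact hi (J.orderEmbOfFin_mem rfl l)

theorem setOf_eq_iUnion_support {X M : Type*} [Zero M] {m : ℕ} (P : (Fin m → M) → Prop)
    (v : X → Fin m → M) :
    {a | P (v a)} = ⋃ J : Finset (Fin m), (⋂ i ∉ J, {a | v a i = 0}) ∩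
      {a | (∀ l, v a (J.orderEmbOfFin rfl l) ≠ 0) ∧
        P (Function.extend (J.orderEmbOfFin rfl) (fun l => v a (J.orderEmbOfFin rfl l)) 0)} := by
  classical
  ext a
  simp only [Set.mem_ofPred_eq, Set.mem_iUnion, Set.mem_inter_iff, Set.mem_iInter]
  constructor
  · intro hP
    set J := Finset.univ.filter fun i => v a i ≠ 0
    have hJ : ∀ i ∉ J, v a i = 0 := by simp [J]
    refine ⟨J, hJ, fun l => ?_, by rwa [J.extend_orderEmbOfFin hJ]⟩
    exact (Finset.mem_filter.1 (J.orderEmbOfFin_mem rfl l)).2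
  · rintro ⟨J, hJ, -, hP⟩
    rwa [J.extend_orderEmbOfFin hJ] at hP

theorem compl_setOf_forall_ne_zero_and {X ι M : Type*} [Zero M] (f : X → ι → M)
    (P : (ι → M) → Prop) :
    {x | (∀ l, f x l ≠ 0) ∧ P (f x)}ᶜ =
      (⋃ l, {x | f x l = 0}) ∪ {x | (∀ l, f x l ≠ 0) ∧ ¬ P (f x)} := by
  ext x
  by_cases h : ∀ l, f x l ≠ 0 <;> simp_all

open FirstOrder Language Topology

theorem FirstOrder.Language.Term.realize_relabel_sumElim_finZeroElim {L : Language} {M α : Type*}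
    [L.Structure M] (t : L.Term (α ⊕ Fin 0)) (v : α → M) (xs : Fin 0 → M) :
    (t.relabel (Sum.elim id finZeroElim)).realize v = t.realize (Sum.elim v xs) := by
  rw [Term.realize_relabel, Sum.comp_elim, Function.comp_id, Subsingleton.elim (v ∘ _) xs]

section Polynomials

variable {Lrel : Language} {D : Type*} [CommRing D] [Ring.CompatibleRing D] [Lrel.Structure D]
  {σ : Type*}

theorem exists_term_realize_eq_eval (p : MvPolynomial σ D) :
    ∃ t : (Language.ring.sum Lrel).Term (σ ⊕ D),
      ∀ a, t.realize (Sum.elim a id) = MvPolynomial.eval a p := by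
  suffices ∃ t : Language.ring.Term (σ ⊕ D),
      ∀ a : σ → D, t.realize (Sum.elim a id) = MvPolynomial.eval a p by
    obtain ⟨t, ht⟩ := this
    exact ⟨LHom.sumInl.onTerm t, fun a => by rw [LHom.realize_onTerm, ht]⟩
  induction p using MvPolynomial.induction_on with
  | C d => exact ⟨Term.var (Sum.inr d), fun a => by simp⟩
  | add p q hp hq =>
    obtain ⟨t, ht⟩ := hp
    obtain ⟨u, hu⟩ := hq
    exact ⟨t + u, fun a => by simp [ht, hu]⟩
  | mul_X p i hp =>
    obtain ⟨t, ht⟩ := hp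
    exact ⟨t * Term.var (Sum.inl i), fun a => by simp [ht]⟩

theorem exists_mvPolynomial_realize_eq_eval [Lrel.IsRelational]
    (t : (Language.ring.sum Lrel).Term (σ ⊕ D)) :
    ∃ p : MvPolynomial σ D, ∀ a, t.realize (Sum.elim a id) = MvPolynomial.eval a p := by
  induction t with
  | var x =>
    rcases x with i | d
    · exact ⟨.X i, fun a => by simp⟩
    · exact ⟨.C d, fun a => by simp⟩
  | func f ts ih =>
    choose p hp using ih
    rcases f with f | f
    · cases f
      · exact ⟨p 0 + p 1, fun a =>
          (Ring.CompatibleRing.funMap_add _).trans (by simp only [hp, map_add])⟩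
      · exact ⟨p 0 * p 1, fun a =>
          (Ring.CompatibleRing.funMap_mul _).trans (by simp only [hp, map_mul])⟩
      · exact ⟨-p 0, fun a =>
          (Ring.CompatibleRing.funMap_neg _).trans (by simp only [hp, map_neg])⟩
      · exact ⟨0, fun a => (Ring.CompatibleRing.funMap_zero _).trans (map_zero _).symm⟩
      · exact ⟨1, fun a => (Ring.CompatibleRing.funMap_one _).trans (map_one _).symm⟩
    · exact isEmptyElim f

end Polynomials

def IsBasicZariskiClosed (D : Type*) [CommRing D] {n : ℕ} (S : Set (Fin n → D)) : Prop :=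
  ∃ p : MvPolynomial (Fin n) D, S = {a | MvPolynomial.eval a p = 0}

def basicSets (Lrel : Language) (D : Type*) [CommRing D] [Ring.CompatibleRing D]
    [Lrel.Structure D] (n : ℕ) : Set (Set (Fin n → D)) :=
  {S | IsBasicZariskiClosed D S} ∪ {S | IsBasicSpecialOpen Lrel D S}

open Set in
theorem isZariskiClosed_sInter {D : Type*} [CommRing D] {n : ℕ} {G : Set (Set (Fin n → D))}
    (hfin : G.Finite) (hG : ∀ Z ∈ G, IsBasicZariskiClosed D Z) : IsZariskiClosed D (⋂₀ G) := by
  obtain ⟨s, g, -, rfl⟩ := hfin.fin_param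
  choose p hp using fun i => hG (g i) (mem_range_self i)
  exact ⟨s, p, (sInter_range g).trans (iInter_congr hp)⟩

section SpecialOpen

open Set

variable {Lrel : Language} {D : Type*} [CommRing D] [Ring.CompatibleRing D] [Lrel.Structure D]
  {n : ℕ}

theorem isBasicSpecialOpen_setOf_eval_ne_zero (p : MvPolynomial (Fin n) D) :
    IsBasicSpecialOpen Lrel D {a : Fin n → D | MvPolynomial.eval a p ≠ 0} := by
  obtain ⟨t, ht⟩ := exists_term_realize_eq_eval (Lrel := Lrel) p
  exact Or.inl ⟨t, by simp only [ht]⟩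

theorem isSpecialOpen_sInter {G : Set (Set (Fin n → D))} (hfin : G.Finite)
    (hG : ∀ U ∈ G, IsBasicSpecialOpen Lrel D U) : IsSpecialOpen Lrel D (⋂₀ G) := by
  obtain ⟨s, g, -, rfl⟩ := hfin.fin_param
  exact ⟨s, g, fun i => hG _ (mem_range_self i), sInter_range g⟩

theorem exists_isZariskiClosed_isSpecialOpen_of_mem_finiteInters {C : Set (Fin n → D)}
    (hC : C ∈ finiteInters (basicSets Lrel D n)) :
    ∃ Z U, IsZariskiClosed D Z ∧ IsSpecialOpen Lrel D U ∧ C = Z ∩ U := by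
  obtain ⟨F, hF, hFfin, rfl⟩ := hC
  refine ⟨⋂₀ (F ∩ {S | IsBasicZariskiClosed D S}), ⋂₀ (F ∩ {S | IsBasicSpecialOpen Lrel D S}),
    isZariskiClosed_sInter (hFfin.subset inter_subset_left) fun _ h => h.2,
    isSpecialOpen_sInter (hFfin.subset inter_subset_left) fun _ h => h.2, ?_⟩
  rw [← sInter_union, ← inter_union_distrib_left]
  exact congrArg sInter (inter_eq_left.2 hF).symm

end SpecialOpen

section BasicBooleanAlgebra

open Set

variable {Lrel : Language} [Lrel.IsRelational] {D : Type*} [CommRing D] [Ring.CompatibleRing D]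
  [Lrel.Structure D] {n : ℕ}

theorem isBasicZariskiClosed_setOf_realize_eq_zero
    (t : (Language.ring.sum Lrel).Term (Fin n ⊕ D)) :
    IsBasicZariskiClosed D {a : Fin n → D | t.realize (Sum.elim a id) = 0} := by
  obtain ⟨p, hp⟩ := exists_mvPolynomial_realize_eq_eval t
  exact ⟨p, by simp only [hp]⟩

theorem compl_mem_finiteUnions_basicSets {B : Set (Fin n → D)} (hB : B ∈ basicSets Lrel D n) :
    Bᶜ ∈ finiteUnions (finiteInters (basicSets Lrel D n)) := by
  have basic : basicSets Lrel D n ⊆ finiteUnions (finiteInters (basicSets Lrel D n)) :=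
    subset_finiteInters.trans subset_finiteUnions
  have zeroSets {k : ℕ} (t : Fin k → (Language.ring.sum Lrel).Term (Fin n ⊕ D)) :
      ⋃ l, {a : Fin n → D | (t l).realize (Sum.elim a id) = 0} ∈
        finiteUnions (finiteInters (basicSets Lrel D n)) :=
    supClosed_finiteUnions.iSup_mem empty_mem_finiteUnions
      fun l => basic (Or.inl (isBasicZariskiClosed_setOf_realize_eq_zero (t l)))
  rcases hB with ⟨p, rfl⟩ | ⟨t, rfl⟩ | ⟨m, k, R, j, hj, t, rfl | rfl⟩
  · rw [compl_ofPred]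
    exact basic (Or.inr (isBasicSpecialOpen_setOf_eval_ne_zero p))
  · simp only [compl_ofPred, not_not]
    exact basic (Or.inl (isBasicZariskiClosed_setOf_realize_eq_zero t))
  · rw [compl_setOf_forall_ne_zero_and (fun a l => (t l).realize (Sum.elim a id))
      (fun b => Structure.RelMap R (Function.extend j b 0))]
    exact supClosed_finiteUnions (zeroSets t)
      (basic (Or.inr (Or.inr ⟨m, k, R, j, hj, t, Or.inr rfl⟩)))
  · rw [compl_setOf_forall_ne_zero_and (fun a l => (t l).realize (Sum.elim a id))
      (fun b => ¬ Structure.RelMap R (Function.extend j b 0))]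
    simp only [not_not]
    exact supClosed_finiteUnions (zeroSets t)
      (basic (Or.inr (Or.inr ⟨m, k, R, j, hj, t, Or.inl rfl⟩)))

variable (Lrel D n) in
def basicBooleanAlgebra : BooleanSubalgebra (Set (Fin n → D)) :=
  .finiteUnionsOfFiniteInters (basicSets Lrel D n) fun _ => compl_mem_finiteUnions_basicSets

theorem basicSets_subset_basicBooleanAlgebra :
    basicSets Lrel D n ⊆ basicBooleanAlgebra Lrel D n :=
  subset_finiteInters.trans subset_finiteUnions

theorem setOf_realize_mem_basicBooleanAlgebra_of_isAtomic
    {ψ : (Language.ring.sum Lrel).BoundedFormula (Fin n ⊕ D) 0} (hψ : ψ.IsAtomic) :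
    {a | ψ.Realize (Sum.elim a id) default} ∈ basicBooleanAlgebra Lrel D n := by
  have realize_relabel (t : (Language.ring.sum Lrel).Term ((Fin n ⊕ D) ⊕ Fin 0)) (a : Fin n → D) :=
    t.realize_relabel_sumElim_finZeroElim (Sum.elim a id) default
  cases hψ with
  | equal t₁ t₂ =>
    obtain ⟨p₁, hp₁⟩ := exists_mvPolynomial_realize_eq_eval (t₁.relabel (Sum.elim id finZeroElim))
    obtain ⟨p₂, hp₂⟩ := exists_mvPolynomial_realize_eq_eval (t₂.relabel (Sum.elim id finZeroElim))
    refine basicSets_subset_basicBooleanAlgebra (Or.inl ⟨p₁ - p₂, ?_⟩)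
    ext a
    simp only [mem_ofPred_eq, BoundedFormula.realize_bdEqual, ← realize_relabel, hp₁, hp₂,
      map_sub, sub_eq_zero]
  | rel R ts =>
    rcases R with R | R
    · exact isEmptyElim R
    set t := fun i => (ts i).relabel (Sum.elim id finZeroElim)
    have hset : {a : Fin n → D | (Relations.boundedFormula (Sum.inr R) ts).Realize
        (Sum.elim a id) default} =
        {a | Structure.RelMap R fun i => (t i).realize (Sum.elim a id)} := by
      ext a
      simp only [mem_ofPred_eq, realize_relabel, t]
      rfl
    rw [hset, setOf_eq_iUnion_support]
    refine BooleanSubalgebra.iSup_mem fun J => BooleanSubalgebra.inf_mem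
      (BooleanSubalgebra.iInf_mem fun i => BooleanSubalgebra.iInf_mem fun _ =>
        basicSets_subset_basicBooleanAlgebra
          (Or.inl (isBasicZariskiClosed_setOf_realize_eq_zero (t i))))
      (basicSets_subset_basicBooleanAlgebra (Or.inr (Or.inr ⟨_, _, R, _,
        (J.orderEmbOfFin rfl).strictMono, fun l => t (J.orderEmbOfFin rfl l), Or.inl rfl⟩)))

theorem setOf_realize_mem_basicBooleanAlgebra_of_isQF
    {ψ : (Language.ring.sum Lrel).BoundedFormula (Fin n ⊕ D) 0} (hψ : ψ.IsQF) :
    {a | ψ.Realize (Sum.elim a id) default} ∈ basicBooleanAlgebra Lrel D n := by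
  induction hψ with
  | falsum => exact BooleanSubalgebra.bot_mem
  | of_isAtomic hψ => exact setOf_realize_mem_basicBooleanAlgebra_of_isAtomic hψ
  | imp _ _ ih₁ ih₂ =>
    convert BooleanSubalgebra.himp_mem ih₁ ih₂ using 1
    ext a
    simp [himp_eq, imp_iff_not_or, or_comm]

theorem exists_iUnion_isZariskiClosed_inter_isSpecialOpen {S : Set (Fin n → D)}
    (hS : S ∈ basicBooleanAlgebra Lrel D n) :
    ∃ (s : ℕ) (Z U : Fin s → Set (Fin n → D)),
      (∀ i, IsZariskiClosed D (Z i) ∧ IsSpecialOpen Lrel D (U i)) ∧ S = ⋃ i, Z i ∩ U i := by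
  obtain ⟨s, f, hf, rfl⟩ := exists_fin_iUnion_of_mem_finiteUnions hS
  choose Z U hZ hU hfZU using fun i =>
    exists_isZariskiClosed_isSpecialOpen_of_mem_finiteInters (hf i)
  exact ⟨s, Z, U, fun i => ⟨hZ i, hU i⟩, iUnion_congr hfZU⟩

end BasicBooleanAlgebra

section Topology

variable {D : Type*} [CommRing D] {n : ℕ} (τ : ∀ m : ℕ, TopologicalSpace (Fin m → D))

theorem IsZariskiClosed.isClosed
    (heval : ∀ p : MvPolynomial (Fin n) D,
      Continuous[τ n, τ 1] fun a (_ : Fin 1) => MvPolynomial.eval a p)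
    (hzero : IsClosed[τ 1] {x : Fin 1 → D | x 0 = 0}) {Z : Set (Fin n → D)}
    (hZ : IsZariskiClosed D Z) : IsClosed[τ n] Z := by
  let _ := τ n
  let _ := τ 1
  obtain ⟨s, p, rfl⟩ := hZ
  exact isClosed_iInter fun i => hzero.preimage (heval (p i))

variable {Lrel : Language} [Ring.CompatibleRing D] [Lrel.Structure D]

theorem continuous_eval_of_continuous_realize
    (hterm : ∀ (s : ℕ) (t : Fin s → (Language.ring.sum Lrel).Term (Fin n ⊕ D)),
      Continuous[τ n, τ s] fun a l => (t l).realize (Sum.elim a id))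
    (p : MvPolynomial (Fin n) D) :
    Continuous[τ n, τ 1] fun a (_ : Fin 1) => MvPolynomial.eval a p := by
  obtain ⟨t, ht⟩ := exists_term_realize_eq_eval (Lrel := Lrel) p
  simpa only [ht] using hterm 1 fun _ => t

theorem IsBasicSpecialOpen.isOpen
    (hterm : ∀ (s : ℕ) (t : Fin s → (Language.ring.sum Lrel).Term (Fin n ⊕ D)),
      Continuous[τ n, τ s] fun a l => (t l).realize (Sum.elim a id))
    (hzero : IsClosed[τ 1] {x : Fin 1 → D | x 0 = 0})
    (hrel : ∀ (m k : ℕ) (R : Lrel.Relations m) (j : Fin k → Fin m), StrictMono j →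
      IsOpen[τ k] {b : Fin k → D | (∀ l, b l ≠ 0) ∧ Structure.RelMap R (Function.extend j b 0)} ∧
      IsOpen[τ k] {b : Fin k → D | (∀ l, b l ≠ 0) ∧ ¬ Structure.RelMap R (Function.extend j b 0)})
    {U : Set (Fin n → D)} (hU : IsBasicSpecialOpen Lrel D U) : IsOpen[τ n] U := by
  let _ := τ n
  rcases hU with ⟨t, rfl⟩ | ⟨m, k, R, j, hj, t, rfl | rfl⟩
  · let _ := τ 1
    exact hzero.isOpen_compl.preimage (hterm 1 fun _ => t)
  · let _ := τ k
    exact (hrel m k R j hj).1.preimage (hterm k t)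
  · let _ := τ k
    exact (hrel m k R j hj).2.preimage (hterm k t)

theorem IsSpecialOpen.isOpen
    (hbasic : ∀ V : Set (Fin n → D), IsBasicSpecialOpen Lrel D V → IsOpen[τ n] V)
    {U : Set (Fin n → D)} (hU : IsSpecialOpen Lrel D U) : IsOpen[τ n] U := by
  let _ := τ n
  obtain ⟨s, V, hV, rfl⟩ := hU
  exact isOpen_iInter_of_finite fun i => hbasic _ (hV i)

end Topology

theorem piecewise_continuity_statement_2_general
    {Lrel : FirstOrder.Language} [Lrel.IsRelational] {D : Type*} [CommRing D]
    [FirstOrder.Ring.CompatibleRing D] [Lrel.Structure D]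
    -- quantifier elimination with parameters from `D`
    (hQE : ∀ (m : ℕ) (φ : (FirstOrder.Language.ring.sum Lrel).Formula (Fin m ⊕ D)),
      ∃ ψ : (FirstOrder.Language.ring.sum Lrel).Formula (Fin m ⊕ D),
        FirstOrder.Language.BoundedFormula.IsQF ψ ∧
        ∀ a : Fin m → D, φ.Realize (Sum.elim a id) ↔ ψ.Realize (Sum.elim a id))
    -- the topological system
    (τ : ∀ m : ℕ, TopologicalSpace (Fin m → D))
    (hterm : ∀ (m s : ℕ) (t : Fin s → (FirstOrder.Language.ring.sum Lrel).Term (Fin m ⊕ D)),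
      @Continuous _ _ (τ m) (τ s) fun a l => (t l).realize (Sum.elim a id))
    (hsingleton : ∀ a : D, @IsClosed _ (τ 1) {x : Fin 1 → D | x 0 = a})
    (hrel : ∀ (m k : ℕ) (R : Lrel.Relations m) (j : Fin k → Fin m), StrictMono j →
      @IsOpen _ (τ k) {b : Fin k → D | (∀ l, b l ≠ 0) ∧
        FirstOrder.Language.Structure.RelMap R (Function.extend j b 0)} ∧
      @IsOpen _ (τ k) {b : Fin k → D | (∀ l, b l ≠ 0) ∧
        ¬ FirstOrder.Language.Structure.RelMap R (Function.extend j b 0)})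
    -- an `L`-definable set with parameters
    {n : ℕ} (S : Set (Fin n → D))
    (hS : ∃ φ : (FirstOrder.Language.ring.sum Lrel).Formula (Fin n ⊕ D),
      S = {a : Fin n → D | φ.Realize (Sum.elim a id)}) :
    (∃ (s : ℕ) (Z U : Fin s → Set (Fin n → D)),
      (∀ i, IsZariskiClosed D (Z i) ∧ IsSpecialOpen Lrel D (U i)) ∧
      S = ⋃ i, Z i ∩ U i) ∧
    (∃ (s : ℕ) (P : Fin s → Set (Fin n → D)),
      (∀ i, @IsLocallyClosed _ (τ n) (P i)) ∧ S = ⋃ i, P i) := by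
  obtain ⟨φ, rfl⟩ := hS
  obtain ⟨ψ, hψ, hφψ⟩ := hQE n φ
  have hset : {a : Fin n → D | φ.Realize (Sum.elim a id)} = {a | ψ.Realize (Sum.elim a id)} :=
    Set.ext hφψ
  obtain ⟨s, Z, U, hZU, hS⟩ := exists_iUnion_isZariskiClosed_inter_isSpecialOpen
    (setOf_realize_mem_basicBooleanAlgebra_of_isQF hψ)
  rw [hset]
  refine ⟨⟨s, Z, U, hZU, hS⟩, s, fun i => Z i ∩ U i, fun i => ?_, hS⟩
  have hZ : IsClosed[τ n] (Z i) := (hZU i).1.isClosed τ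
    (continuous_eval_of_continuous_realize τ (hterm n)) (hsingleton 0)
  have hU : IsOpen[τ n] (U i) := (hZU i).2.isOpen τ fun _ hV =>
    hV.isOpen τ (hterm n) (hsingleton 0) hrel
  exact ⟨U i, Z i, hU, hZ, Set.inter_comm _ _⟩

/-- Let `L` be a language extending the language of rings whose only
function symbols are the ring ones (formalized as `L = ring ⊕ Lrel` with `Lrel`
relational), and let `D` be an infinite integral domain which is an `L`-structure
admitting quantifier elimination and equipped with a topological system.  Then every
`L`-definable (with parameters) subset of `D^n` is a finite union of intersections of a
Zariski closed subset with a special open subset, and in particular a finite union of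
locally closed subsets of `D^n`. -/
theorem piecewise_continuity_statement_2
    {Lrel : FirstOrder.Language} [Lrel.IsRelational] {D : Type*} [CommRing D] [IsDomain D]
    [Infinite D] [FirstOrder.Ring.CompatibleRing D] [Lrel.Structure D]
    -- quantifier elimination with parameters from `D`
    (hQE : ∀ (m : ℕ) (φ : (FirstOrder.Language.ring.sum Lrel).Formula (Fin m ⊕ D)),
      ∃ ψ : (FirstOrder.Language.ring.sum Lrel).Formula (Fin m ⊕ D),
        FirstOrder.Language.BoundedFormula.IsQF ψ ∧
        ∀ a : Fin m → D, φ.Realize (Sum.elim a id) ↔ ψ.Realize (Sum.elim a id))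
    -- the topological system
    (τ : ∀ m : ℕ, TopologicalSpace (Fin m → D))
    (hterm : ∀ (m s : ℕ) (t : Fin s → (FirstOrder.Language.ring.sum Lrel).Term (Fin m ⊕ D)),
      @Continuous _ _ (τ m) (τ s) fun a l => (t l).realize (Sum.elim a id))
    (hsingleton : ∀ a : D, @IsClosed _ (τ 1) {x : Fin 1 → D | x 0 = a})
    (hrel : ∀ (m k : ℕ) (R : Lrel.Relations m) (j : Fin k → Fin m), StrictMono j →
      @IsOpen _ (τ k) {b : Fin k → D | (∀ l, b l ≠ 0) ∧
        FirstOrder.Language.Structure.RelMap R (Function.extend j b 0)} ∧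
      @IsOpen _ (τ k) {b : Fin k → D | (∀ l, b l ≠ 0) ∧
        ¬ FirstOrder.Language.Structure.RelMap R (Function.extend j b 0)})
    -- an `L`-definable set with parameters
    {n : ℕ} (S : Set (Fin n → D))
    (hS : ∃ φ : (FirstOrder.Language.ring.sum Lrel).Formula (Fin n ⊕ D),
      S = {a : Fin n → D | φ.Realize (Sum.elim a id)}) :
    (∃ (s : ℕ) (Z U : Fin s → Set (Fin n → D)),
      (∀ i, IsZariskiClosed D (Z i) ∧ IsSpecialOpen Lrel D (U i)) ∧
      S = ⋃ i, Z i ∩ U i) ∧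
    (∃ (s : ℕ) (P : Fin s → Set (Fin n → D)),
      (∀ i, @IsLocallyClosed _ (τ n) (P i)) ∧ S = ⋃ i, P i) :=
  piecewise_continuity_statement_2_general hQE τ hterm hsingleton hrel S hS
end

section
/- Let L be a first-order language extending the language of rings whose only function symbols are those of the language of rings, and let D be an infinite integral domain which is an L-structure admitting quantifier elimination and equipped with a topological system (topologies τ_n on each D^n such that term maps are continuous, singletons in D are closed, and for every relation symbol R and every choice of coordinates the set of tuples with nonzero coordinates realizing R, and the set realizing its negation, placed at those coordinates with zeros elsewhere, are open). Then every L-definable (with parameters) subset of D^n is a finite disjoint union of L-definable locally closed subsets of D^n. -/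
open FirstOrder FirstOrder.Language FirstOrder.Language.Structure FirstOrder.Ring Set Function

theorem Function.Injective.extend_comp_eq_of_eqOn_compl_range {α β γ : Type*} {f : α → β}
    (hf : Injective f) {g e' : β → γ} (h : EqOn g e' (range f)ᶜ) : extend f (g ∘ f) e' = g := by
  funext b
  by_cases hb : ∃ a, f a = b
  · obtain ⟨a, rfl⟩ := hb
    exact hf.extend_apply _ _ a
  · rw [extend_apply' _ _ _ hb]
    exact (h hb).symm

section FiniteDisjointUnion

variable {X : Type*} {G : Set X → Prop} {S T : Set X}

def IsFiniteDisjointUnion (G : Set X → Prop) (S : Set X) : Prop :=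
  ∃ (s : ℕ) (P : Fin s → Set X), (∀ i, G (P i)) ∧ Pairwise (Disjoint on P) ∧ S = ⋃ i, P i

namespace IsFiniteDisjointUnion

theorem of_finite {ι : Type*} [Finite ι] (P : ι → Set X) (hG : ∀ i, G (P i))
    (hP : Pairwise (Disjoint on P)) (hS : S = ⋃ i, P i) : IsFiniteDisjointUnion G S := by
  obtain ⟨s, ⟨e⟩⟩ := Finite.exists_equiv_fin ι
  refine ⟨s, P ∘ e.symm, fun i => hG _, hP.comp_of_injective e.symm.injective, ?_⟩
  rw [hS, comp_def, e.symm.surjective.iUnion_comp P]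

theorem empty : IsFiniteDisjointUnion G ∅ :=
  ⟨0, Fin.elim0, fun i => i.elim0, fun i => i.elim0, iUnion_of_empty _ |>.symm⟩

theorem of_mem (h : G S) : IsFiniteDisjointUnion G S :=
  of_finite (fun _ : Unit => S) (fun _ => h) (fun a b hab => (hab (Subsingleton.elim a b)).elim)
    (iUnion_const S).symm

theorem of_fibers {κ : Type*} [Finite κ] (f : X → κ) (h : ∀ c, G (f ⁻¹' {c} ∩ S)) :
    IsFiniteDisjointUnion G S := by
  refine of_finite _ h (fun c c' hcc' => ?_) ?_
  · exact ((disjoint_singleton.2 hcc').preimage f).mono inter_subset_left inter_subset_left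
  · rw [← iUnion_inter, ← preimage_iUnion, iUnion_of_singleton, preimage_univ, univ_inter]

theorem union (hS : IsFiniteDisjointUnion G S) (hT : IsFiniteDisjointUnion G T)
    (hST : Disjoint S T) : IsFiniteDisjointUnion G (S ∪ T) := by
  obtain ⟨s, P, hPG, hP, rfl⟩ := hS
  obtain ⟨t, Q, hQG, hQ, rfl⟩ := hT
  refine of_finite (Sum.elim P Q) (Sum.forall.2 ⟨hPG, hQG⟩) ?_ (iUnion_sumElim P Q).symm
  rintro (i | i) (j | j) hij
  · exact hP fun h => hij (congrArg _ h)
  · exact hST.mono (subset_iUnion P i) (subset_iUnion Q j)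
  · exact hST.symm.mono (subset_iUnion Q i) (subset_iUnion P j)
  · exact hQ fun h => hij (congrArg _ h)

theorem inter (hG : ∀ A B, G A → G B → G (A ∩ B)) (hS : IsFiniteDisjointUnion G S)
    (hT : IsFiniteDisjointUnion G T) : IsFiniteDisjointUnion G (S ∩ T) := by
  obtain ⟨s, P, hPG, hP, rfl⟩ := hS
  obtain ⟨t, Q, hQG, hQ, rfl⟩ := hT
  refine of_finite (fun p : Fin s × Fin t => P p.1 ∩ Q p.2) (fun p => hG _ _ (hPG _) (hQG _))
    ?_ (by rw [iUnion_inter_iUnion, iUnion_prod'])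
  rintro ⟨i, j⟩ ⟨i', j'⟩ hne
  by_cases hi : i = i'
  · have hj : j ≠ j' := fun hj => hne (by rw [hi, hj])
    exact (hQ hj).mono inter_subset_right inter_subset_right
  · exact (hP hi).mono inter_subset_left inter_subset_left

theorem compl_union_and_compl (hG : ∀ A B, G A → G B → G (A ∩ B))
    (hS : IsFiniteDisjointUnion G S) (hSc : IsFiniteDisjointUnion G Sᶜ)
    (hT : IsFiniteDisjointUnion G T) (hTc : IsFiniteDisjointUnion G Tᶜ) :
    IsFiniteDisjointUnion G (Sᶜ ∪ T) ∧ IsFiniteDisjointUnion G (Sᶜ ∪ T)ᶜ := by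
  constructor
  · have h : Sᶜ ∪ T = Sᶜ ∪ (S ∩ T) := by rw [union_inter_distrib_left, compl_union_self, univ_inter]
    rw [h]
    exact hSc.union (hS.inter hG hT) (disjoint_compl_left.mono_right inter_subset_left)
  · rw [compl_union, compl_compl]
    exact hS.inter hG hTc

end IsFiniteDisjointUnion

end FiniteDisjointUnion

def ParamDefinable (L : Language) {M : Type*} [L.Structure M] {α : Type*}
    (S : Set (α → M)) : Prop :=
  ∃ φ : L.Formula (α ⊕ M), S = {a | φ.Realize (Sum.elim a id)}

section Definable

variable {L : Language} {M : Type*} [L.Structure M] {α : Type*}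

namespace ParamDefinable

variable {S T : Set (α → M)}

theorem inter (hS : ParamDefinable L S) (hT : ParamDefinable L T) : ParamDefinable L (S ∩ T) := by
  obtain ⟨φ, rfl⟩ := hS
  obtain ⟨ψ, rfl⟩ := hT
  exact ⟨φ ⊓ ψ, by ext; simp⟩

theorem compl (hS : ParamDefinable L S) : ParamDefinable L Sᶜ := by
  obtain ⟨φ, rfl⟩ := hS
  exact ⟨φ.not, by ext; simp⟩

theorem iInter {ι : Type*} [Finite ι] {S : ι → Set (α → M)} (hS : ∀ i, ParamDefinable L (S i)) :
    ParamDefinable L (⋂ i, S i) := by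
  choose φ hφ using hS
  exact ⟨Formula.iInf φ, by ext; simp [hφ]⟩

theorem setOf_realize_eq (t₁ t₂ : L.Term (α ⊕ M)) :
    ParamDefinable L {a | t₁.realize (Sum.elim a id) = t₂.realize (Sum.elim a id)} :=
  ⟨t₁.equal t₂, by ext; simp⟩

theorem setOf_relMap {m : ℕ} (R : L.Relations m) (ts : Fin m → L.Term (α ⊕ M)) :
    ParamDefinable L {a | RelMap R fun q => (ts q).realize (Sum.elim a id)} :=
  ⟨Relations.formula R ts, by ext; simp⟩

end ParamDefinable

theorem FirstOrder.Language.Term.exists_realize_eq_sumElim_finZero (t : L.Term (α ⊕ Fin 0)) :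
    ∃ t' : L.Term α, ∀ (v : α → M) (xs : Fin 0 → M), t'.realize v = t.realize (Sum.elim v xs) := by
  refine ⟨t.relabel (Equiv.sumEmpty α (Fin 0)), fun v xs => ?_⟩
  rw [Term.realize_relabel]
  congr 1
  ext (x | i)
  · rfl
  · exact i.elim0

end Definable

def subTerm {L : Language} {β : Type*} (t₁ t₂ : (Language.ring.sum L).Term β) :
    (Language.ring.sum L).Term β :=
  Term.func (Sum.inl addFunc) ![t₁, Term.func (Sum.inl negFunc) ![t₂] ]

@[simp]
theorem realize_subTerm {L : Language} {R : Type*} [Ring R] [CompatibleRing R] [L.Structure R]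
    {β : Type*} (t₁ t₂ : (Language.ring.sum L).Term β) (v : β → R) :
    (subTerm t₁ t₂).realize v = t₁.realize v - t₂.realize v := by
  simp [subTerm, Term.realize, sub_eq_add_neg]

def IsDefinableLocallyClosed (Lrel : Language) {D : Type*} [Ring D] [CompatibleRing D]
    [Lrel.Structure D] {n : ℕ} (τ : TopologicalSpace (Fin n → D)) (P : Set (Fin n → D)) : Prop :=
  ParamDefinable (Language.ring.sum Lrel) P ∧ @IsLocallyClosed _ τ P

structure IsTopologicalSystem (Lrel : Language) (D : Type*) [Ring D] [CompatibleRing D]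
    [Lrel.Structure D] (τ : ∀ m : ℕ, TopologicalSpace (Fin m → D)) : Prop where
  continuous_realize : ∀ (m s : ℕ) (t : Fin s → (Language.ring.sum Lrel).Term (Fin m ⊕ D)),
    @Continuous _ _ (τ m) (τ s) fun a l => (t l).realize (Sum.elim a id)
  isClosed_singleton : ∀ a : D, @IsClosed _ (τ 1) {x : Fin 1 → D | x 0 = a}
  isOpen_relMap : ∀ (m k : ℕ) (R : Lrel.Relations m) (j : Fin k → Fin m), StrictMono j →
    @IsOpen _ (τ k) {b : Fin k → D | (∀ l, b l ≠ 0) ∧ RelMap R (extend j b 0)} ∧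
    @IsOpen _ (τ k) {b : Fin k → D | (∀ l, b l ≠ 0) ∧ ¬ RelMap R (extend j b 0)}

section TopologicalSystem

variable {Lrel : Language} {D : Type*} [Ring D] [CompatibleRing D] [Lrel.Structure D] {n : ℕ}

theorem IsDefinableLocallyClosed.inter {τ : TopologicalSpace (Fin n → D)} {A B : Set (Fin n → D)}
    (hA : IsDefinableLocallyClosed Lrel τ A) (hB : IsDefinableLocallyClosed Lrel τ B) :
    IsDefinableLocallyClosed Lrel τ (A ∩ B) :=
  ⟨hA.1.inter hB.1, @IsLocallyClosed.inter _ τ _ _ hA.2 hB.2⟩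

namespace IsTopologicalSystem

variable {τ : ∀ m : ℕ, TopologicalSpace (Fin m → D)} (hτ : IsTopologicalSystem Lrel D τ)
include hτ

theorem isClosed_setOf_realize_eq (t₁ t₂ : (Language.ring.sum Lrel).Term (Fin n ⊕ D)) :
    @IsClosed _ (τ n) {a | t₁.realize (Sum.elim a id) = t₂.realize (Sum.elim a id)} := by
  let _ := τ n
  let _ := τ 1
  have h := (hτ.isClosed_singleton 0).preimage (hτ.continuous_realize n 1 fun _ => subTerm t₁ t₂)
  simpa only [preimage_ofPred_eq, realize_subTerm, sub_eq_zero] using h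

theorem isLocallyClosed_zeroPattern_inter {m : ℕ}
    (ts : Fin m → (Language.ring.sum Lrel).Term (Fin n ⊕ D)) (N : Finset (Fin m))
    {Q : (Fin m → D) → Prop}
    (hQ : ∀ k (j : Fin k → Fin m), StrictMono j →
      @IsOpen _ (τ k) {b : Fin k → D | (∀ l, b l ≠ 0) ∧ Q (extend j b 0)}) :
    @IsLocallyClosed _ (τ n) ({a | ∀ q, (ts q).realize (Sum.elim a id) ≠ 0 ↔ q ∈ N} ∩
      {a | Q fun q => (ts q).realize (Sum.elim a id)}) := by
  let _ := τ n
  set j := N.orderEmbOfFin rfl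
  set v : (Fin n → D) → Fin m → D := fun a q => (ts q).realize (Sum.elim a id)
  have hj : range j = N := Finset.range_orderEmbOfFin N rfl
  have heq : {a | ∀ q, v a q ≠ 0 ↔ q ∈ N} ∩ {a | Q (v a)} =
      (⋂ q ∈ (N : Set (Fin m))ᶜ, {a | v a q = 0}) ∩
        (fun a => v a ∘ j) ⁻¹' {b | (∀ l, b l ≠ 0) ∧ Q (extend j b 0)} := by
    ext a
    have hext (hzero : ∀ q ∉ N, v a q = 0) : extend j (v a ∘ j) 0 = v a :=
      j.injective.extend_comp_eq_of_eqOn_compl_range fun q hq => hzero q (by rwa [hj] at hq)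
    simp only [mem_inter_iff, mem_iInter, mem_ofPred_eq, mem_preimage, mem_compl_iff,
      Finset.mem_coe, comp_apply]
    constructor
    · rintro ⟨hN, hQa⟩
      have hzero : ∀ q ∉ N, v a q = 0 := fun q hq => not_not.1 fun h => hq ((hN q).1 h)
      exact ⟨hzero, fun l => (hN _).2 (N.orderEmbOfFin_mem rfl l), by rwa [hext hzero]⟩
    · rintro ⟨hzero, hnz, hQa⟩
      refine ⟨fun q => ⟨fun h => not_not.1 fun hq => h (hzero q hq), fun hq => ?_⟩,
        by rwa [hext hzero] at hQa⟩
      obtain ⟨l, rfl⟩ : q ∈ range j := hj ▸ hq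
      exact hnz l
  rw [heq]
  let _ := τ N.card
  refine IsLocallyClosed.inter (isClosed_biInter fun q _ => ?_).isLocallyClosed
    ((hQ _ j j.strictMono).preimage (hτ.continuous_realize n _ fun l => ts (j l))).isLocallyClosed
  exact hτ.isClosed_setOf_realize_eq (ts q) (Term.var (Sum.inr 0))

theorem isFiniteDisjointUnion_setOf_realize_eq
    (t₁ t₂ : (Language.ring.sum Lrel).Term (Fin n ⊕ D)) :
    IsFiniteDisjointUnion (IsDefinableLocallyClosed Lrel (τ n))
        {a | t₁.realize (Sum.elim a id) = t₂.realize (Sum.elim a id)} ∧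
      IsFiniteDisjointUnion (IsDefinableLocallyClosed Lrel (τ n))
        {a | t₁.realize (Sum.elim a id) = t₂.realize (Sum.elim a id)}ᶜ := by
  let _ := τ n
  have hdef := ParamDefinable.setOf_realize_eq t₁ t₂
  have hclosed := hτ.isClosed_setOf_realize_eq t₁ t₂
  exact ⟨.of_mem ⟨hdef, hclosed.isLocallyClosed⟩,
    .of_mem ⟨hdef.compl, hclosed.isOpen_compl.isLocallyClosed⟩⟩

theorem isFiniteDisjointUnion_setOf_relMap {m : ℕ} (R : Lrel.Relations m)
    (ts : Fin m → (Language.ring.sum Lrel).Term (Fin n ⊕ D)) :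
    IsFiniteDisjointUnion (IsDefinableLocallyClosed Lrel (τ n))
        {a | RelMap R fun q => (ts q).realize (Sum.elim a id)} ∧
      IsFiniteDisjointUnion (IsDefinableLocallyClosed Lrel (τ n))
        {a | RelMap R fun q => (ts q).realize (Sum.elim a id)}ᶜ := by
  classical
  let zeroPattern (a : Fin n → D) : Finset (Fin m) :=
    {q | (ts q).realize (Sum.elim a id) ≠ 0}
  have hfiber (N : Finset (Fin m)) :
      zeroPattern ⁻¹' {N} = {a | ∀ q, (ts q).realize (Sum.elim a id) ≠ 0 ↔ q ∈ N} := by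
    ext a
    simp [zeroPattern, Finset.ext_iff]
  have hfiber_def (N : Finset (Fin m)) :
      ParamDefinable (Language.ring.sum Lrel) (zeroPattern ⁻¹' {N}) := by
    rw [hfiber, ofPred_forall]
    refine ParamDefinable.iInter fun q => ?_
    have hzero := ParamDefinable.setOf_realize_eq (ts q) (Term.var (Sum.inr 0))
    by_cases hq : q ∈ N
    · simp only [hq, iff_true]
      exact hzero.compl
    · simp only [hq, iff_false, not_not]
      exact hzero
  have hrel := ParamDefinable.setOf_relMap (L := Language.ring.sum Lrel) (Sum.inr R) ts
  constructor
  · refine .of_fibers zeroPattern fun N => ⟨(hfiber_def N).inter hrel, ?_⟩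
    rw [hfiber]
    exact hτ.isLocallyClosed_zeroPattern_inter ts N fun k j hj => (hτ.isOpen_relMap m k R j hj).1
  · refine .of_fibers zeroPattern fun N => ⟨(hfiber_def N).inter hrel.compl, ?_⟩
    rw [hfiber]
    exact hτ.isLocallyClosed_zeroPattern_inter ts N (Q := fun w => ¬ RelMap R w)
      fun k j hj => (hτ.isOpen_relMap m k R j hj).2

theorem isFiniteDisjointUnion_setOf_realize_of_isQF
    {φ : (Language.ring.sum Lrel).Formula (Fin n ⊕ D)} (hφ : φ.IsQF) :
    IsFiniteDisjointUnion (IsDefinableLocallyClosed Lrel (τ n)) {a | φ.Realize (Sum.elim a id)} ∧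
      IsFiniteDisjointUnion (IsDefinableLocallyClosed Lrel (τ n))
        {a | φ.Realize (Sum.elim a id)}ᶜ := by
  induction hφ with
  | falsum =>
    have hempty : {a : Fin n → D |
        Formula.Realize (BoundedFormula.falsum (L := Language.ring.sum Lrel)) (Sum.elim a id)} =
          ∅ :=
      eq_empty_iff_forall_notMem.2 fun _ => id
    have huniv : IsDefinableLocallyClosed Lrel (τ n) univ :=
      ⟨⟨⊤, by ext; simp⟩, @isOpen_univ _ (τ n) |>.isLocallyClosed⟩
    rw [hempty, compl_empty]
    exact ⟨.empty, .of_mem huniv⟩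
  | of_isAtomic hatom =>
    cases hatom with
    | equal t₁ t₂ =>
      obtain ⟨t₁', ht₁⟩ := Term.exists_realize_eq_sumElim_finZero (M := D) t₁
      obtain ⟨t₂', ht₂⟩ := Term.exists_realize_eq_sumElim_finZero (M := D) t₂
      have h : {a | Formula.Realize (t₁.bdEqual t₂) (Sum.elim a id)} =
          {a | t₁'.realize (Sum.elim a id) = t₂'.realize (Sum.elim a id)} := by
        ext; simp [Formula.Realize, ← ht₁, ← ht₂]
      rw [h]
      exact hτ.isFiniteDisjointUnion_setOf_realize_eq t₁' t₂'
    | @rel l R ts =>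
      rcases R with r | R
      · exact isEmptyElim r
      choose ts' hts' using fun q => Term.exists_realize_eq_sumElim_finZero (M := D) (ts q)
      have h : {a | Formula.Realize (Relations.boundedFormula (Sum.inr R) ts) (Sum.elim a id)} =
          {a | RelMap R fun q => (ts' q).realize (Sum.elim a id)} :=
        ext fun a => iff_of_eq (congrArg (RelMap R) (funext fun q => (hts' q _ default).symm))
      rw [h]
      exact hτ.isFiniteDisjointUnion_setOf_relMap R ts'
  | @imp φ ψ _ _ ih₁ ih₂ =>
    have h : {a | Formula.Realize (φ.imp ψ) (Sum.elim a id)} =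
        {a | Formula.Realize φ (Sum.elim a id)}ᶜ ∪ {a | Formula.Realize ψ (Sum.elim a id)} := by
      ext; simp [Formula.Realize, imp_iff_not_or]
    rw [h]
    exact IsFiniteDisjointUnion.compl_union_and_compl (fun _ _ => .inter) ih₁.1 ih₁.2 ih₂.1 ih₂.2

end IsTopologicalSystem

end TopologicalSystem

theorem piecewise_continuity_statement_3_general
    {Lrel : FirstOrder.Language} {D : Type*} [CommRing D]
    [FirstOrder.Ring.CompatibleRing D] [Lrel.Structure D]
    -- quantifier elimination with parameters from `D`
    (hQE : ∀ (m : ℕ) (φ : (FirstOrder.Language.ring.sum Lrel).Formula (Fin m ⊕ D)),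
      ∃ ψ : (FirstOrder.Language.ring.sum Lrel).Formula (Fin m ⊕ D),
        FirstOrder.Language.BoundedFormula.IsQF ψ ∧
        ∀ a : Fin m → D, φ.Realize (Sum.elim a id) ↔ ψ.Realize (Sum.elim a id))
    -- the topological system
    (τ : ∀ m : ℕ, TopologicalSpace (Fin m → D))
    (hterm : ∀ (m s : ℕ) (t : Fin s → (FirstOrder.Language.ring.sum Lrel).Term (Fin m ⊕ D)),
      @Continuous _ _ (τ m) (τ s) fun a l => (t l).realize (Sum.elim a id))
    (hsingleton : ∀ a : D, @IsClosed _ (τ 1) {x : Fin 1 → D | x 0 = a})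
    (hrel : ∀ (m k : ℕ) (R : Lrel.Relations m) (j : Fin k → Fin m), StrictMono j →
      @IsOpen _ (τ k) {b : Fin k → D | (∀ l, b l ≠ 0) ∧
        FirstOrder.Language.Structure.RelMap R (Function.extend j b 0)} ∧
      @IsOpen _ (τ k) {b : Fin k → D | (∀ l, b l ≠ 0) ∧
        ¬ FirstOrder.Language.Structure.RelMap R (Function.extend j b 0)})
    -- an `L`-definable set with parameters
    {n : ℕ} (S : Set (Fin n → D))
    (hS : ∃ φ : (FirstOrder.Language.ring.sum Lrel).Formula (Fin n ⊕ D),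
      S = {a : Fin n → D | φ.Realize (Sum.elim a id)}) :
    ∃ (s : ℕ) (P : Fin s → Set (Fin n → D)),
      (∀ i, (∃ φ : (FirstOrder.Language.ring.sum Lrel).Formula (Fin n ⊕ D),
          P i = {a : Fin n → D | φ.Realize (Sum.elim a id)}) ∧
        @IsLocallyClosed _ (τ n) (P i)) ∧
      Pairwise (Function.onFun Disjoint P) ∧
      S = ⋃ i, P i := by
  obtain ⟨φ, rfl⟩ := hS
  obtain ⟨ψ, hψ, hφψ⟩ := hQE n φ
  have hτ : IsTopologicalSystem Lrel D τ := ⟨hterm, hsingleton, hrel⟩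
  rw [show {a : Fin n → D | φ.Realize (Sum.elim a id)} = {a | ψ.Realize (Sum.elim a id)} from
    Set.ext hφψ]
  exact (hτ.isFiniteDisjointUnion_setOf_realize_of_isQF hψ).1

/-- Let `L` be a language extending the language of rings whose only
function symbols are the ring ones (formalized as `L = ring ⊕ Lrel` with `Lrel`
relational), and let `D` be an infinite integral domain which is an `L`-structure
admitting quantifier elimination and equipped with a topological system.  Then every
`L`-definable (with parameters) subset of `D^n` is a finite disjoint union of
`L`-definable locally closed subsets of `D^n`. -/
theorem piecewise_continuity_statement_3
    {Lrel : FirstOrder.Language} [Lrel.IsRelational] {D : Type*} [CommRing D] [IsDomain D]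
    [Infinite D] [FirstOrder.Ring.CompatibleRing D] [Lrel.Structure D]
    -- quantifier elimination with parameters from `D`
    (hQE : ∀ (m : ℕ) (φ : (FirstOrder.Language.ring.sum Lrel).Formula (Fin m ⊕ D)),
      ∃ ψ : (FirstOrder.Language.ring.sum Lrel).Formula (Fin m ⊕ D),
        FirstOrder.Language.BoundedFormula.IsQF ψ ∧
        ∀ a : Fin m → D, φ.Realize (Sum.elim a id) ↔ ψ.Realize (Sum.elim a id))
    -- the topological system
    (τ : ∀ m : ℕ, TopologicalSpace (Fin m → D))
    (hterm : ∀ (m s : ℕ) (t : Fin s → (FirstOrder.Language.ring.sum Lrel).Term (Fin m ⊕ D)),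
      @Continuous _ _ (τ m) (τ s) fun a l => (t l).realize (Sum.elim a id))
    (hsingleton : ∀ a : D, @IsClosed _ (τ 1) {x : Fin 1 → D | x 0 = a})
    (hrel : ∀ (m k : ℕ) (R : Lrel.Relations m) (j : Fin k → Fin m), StrictMono j →
      @IsOpen _ (τ k) {b : Fin k → D | (∀ l, b l ≠ 0) ∧
        FirstOrder.Language.Structure.RelMap R (Function.extend j b 0)} ∧
      @IsOpen _ (τ k) {b : Fin k → D | (∀ l, b l ≠ 0) ∧
        ¬ FirstOrder.Language.Structure.RelMap R (Function.extend j b 0)})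
    -- an `L`-definable set with parameters
    {n : ℕ} (S : Set (Fin n → D))
    (hS : ∃ φ : (FirstOrder.Language.ring.sum Lrel).Formula (Fin n ⊕ D),
      S = {a : Fin n → D | φ.Realize (Sum.elim a id)}) :
    ∃ (s : ℕ) (P : Fin s → Set (Fin n → D)),
      (∀ i, (∃ φ : (FirstOrder.Language.ring.sum Lrel).Formula (Fin n ⊕ D),
          P i = {a : Fin n → D | φ.Realize (Sum.elim a id)}) ∧
        @IsLocallyClosed _ (τ n) (P i)) ∧
      Pairwise (Function.onFun Disjoint P) ∧
      S = ⋃ i, P i :=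
  piecewise_continuity_statement_3_general hQE τ hterm hsingleton hrel S hS
end
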